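/- arXiv:2301.07733 — 11 statements merged into one kernel-verified Lean document; each statement's English description precedes it below -/
import Mathlib

section
/- Let $f:\mathbb{R}^p\to\mathbb{R}$ be convex with minimizer $x_*$ and minimum value $f_*$. Let $x_0\in\mathbb{R}^p$, let $\lambda_k>0$ be weights, $g_k\in\partial f(x_k)$ subgradients, $s_0=0$, $s_{k+1}=s_k+\lambda_k g_k$, and let $\gamma_0\geq\gamma_1\geq\dots\geq\gamma_{n+1}>0$ be a non-increasing positive sequence, with iterates $x_{k}=x_0-\gamma_{k}s_{k}$. Then $\sum_{k=0}^{n}\lambda_k(f(x_k)-f_*) \leq \|x_0-x_*\|\|s_{n+1}\| + \sum_{k=0}^{n}\frac{\gamma_k}{2}\lambda_k^2\|g_k\|^2 - \frac{\gamma_{n+1}}{2}\|s_{n+1}\|^2$. -/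
open Finset

theorem stmt1 (p n : ℕ) (f : EuclideanSpace ℝ (Fin p) → ℝ)
    (hconv : ConvexOn ℝ Set.univ f)
    (xstar x0 : EuclideanSpace ℝ (Fin p))
    (hmin : ∀ y, f xstar ≤ f y)
    (g s x : ℕ → EuclideanSpace ℝ (Fin p)) (lam γ : ℕ → ℝ)
    (hlam : ∀ k, 0 < lam k)
    (hγpos : ∀ k, 0 < γ k)
    (hγ : ∀ k, γ (k + 1) ≤ γ k)
    (hs0 : s 0 = 0) (hs : ∀ k, s (k + 1) = s k + lam k • g k)
    (hx : ∀ k, x k = x0 - γ k • s k)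
    (hsubgrad : ∀ k, ∀ y, f (x k) + (inner ℝ (g k) (y - x k) : ℝ) ≤ f y) :
    ∑ k ∈ range (n + 1), lam k * (f (x k) - f xstar) ≤
      ‖x0 - xstar‖ * ‖s (n + 1)‖
      + ∑ k ∈ range (n + 1), (γ k / 2) * (lam k) ^ 2 * ‖g k‖ ^ 2
      - (γ (n + 1) / 2) * ‖s (n + 1)‖ ^ 2 := by
  -- norm square recursion for s
  have hsq : ∀ k, ‖s (k + 1)‖ ^ 2
      = ‖s k‖ ^ 2 + 2 * (lam k * (inner ℝ (g k) (s k) : ℝ)) + (lam k) ^ 2 * ‖g k‖ ^ 2 := by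
    intro k
    rw [hs k, @norm_add_sq_real, real_inner_smul_right, norm_smul,
      real_inner_comm (s k) (g k), Real.norm_eq_abs, abs_of_pos (hlam k)]
    ring
  -- key inductive inequality
  have key : ∀ m : ℕ, ∑ k ∈ range (m + 1), (-(γ k * (lam k * (inner ℝ (g k) (s k) : ℝ)))) ≤
      ∑ k ∈ range (m + 1), (γ k / 2) * (lam k) ^ 2 * ‖g k‖ ^ 2
        - (γ (m + 1) / 2) * ‖s (m + 1)‖ ^ 2 := by
    intro m
    induction m with
    | zero =>
      simp only [Nat.zero_add, range_one, sum_singleton]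
      have h0 : (inner ℝ (g 0) (s 0) : ℝ) = 0 := by rw [hs0]; simp
      have h1 : ‖s 1‖ ^ 2 = (lam 0) ^ 2 * ‖g 0‖ ^ 2 := by
        have := hsq 0
        rw [hs0] at this
        simpa using this
      rw [h0, h1]
      have hg0 : (0:ℝ) ≤ ‖g 0‖ ^ 2 := sq_nonneg _
      have hl0 : (0:ℝ) ≤ (lam 0) ^ 2 := sq_nonneg _
      nlinarith [hγ 0, hγpos 1]
    | succ m ih =>
      rw [sum_range_succ, sum_range_succ (fun k => (γ k / 2) * (lam k) ^ 2 * ‖g k‖ ^ 2)]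
      have step : -(γ (m + 1) * (lam (m + 1) * (inner ℝ (g (m + 1)) (s (m + 1)) : ℝ)))
          ≤ (γ (m + 1) / 2) * ‖s (m + 1)‖ ^ 2
            + (γ (m + 1) / 2) * (lam (m + 1)) ^ 2 * ‖g (m + 1)‖ ^ 2
            - (γ (m + 2) / 2) * ‖s (m + 2)‖ ^ 2 := by
        have heq : γ (m + 1) / 2 * ‖s (m + 2)‖ ^ 2
            = γ (m + 1) / 2 * ‖s (m + 1)‖ ^ 2
              + γ (m + 1) * (lam (m + 1) * (inner ℝ (g (m + 1)) (s (m + 1)) : ℝ))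
              + γ (m + 1) / 2 * (lam (m + 1)) ^ 2 * ‖g (m + 1)‖ ^ 2 := by
          rw [show m + 2 = m + 1 + 1 from rfl, hsq (m + 1)]; ring
        have hmono : (γ (m + 2) / 2) * ‖s (m + 2)‖ ^ 2 ≤ (γ (m + 1) / 2) * ‖s (m + 2)‖ ^ 2 := by
          have := hγ (m + 1)
          nlinarith [sq_nonneg ‖s (m + 2)‖]
        linarith [heq, hmono]
      linarith
  -- inner product decomposition for each term
  have hterm : ∀ k, lam k * (f (x k) - f xstar) ≤
      -(γ k * (lam k * (inner ℝ (g k) (s k) : ℝ))) + lam k * (inner ℝ (g k) (x0 - xstar) : ℝ) := by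
    intro k
    have hsub := hsubgrad k xstar
    have hneg : (inner ℝ (g k) (xstar - x k) : ℝ) = -(inner ℝ (g k) (x k - xstar) : ℝ) := by
      rw [← inner_neg_right]; congr 1; abel
    have h1 : f (x k) - f xstar ≤ (inner ℝ (g k) (x k - xstar) : ℝ) := by
      rw [hneg] at hsub; linarith
    have hdec : (inner ℝ (g k) (x k - xstar) : ℝ)
        = -(γ k * (inner ℝ (g k) (s k) : ℝ)) + (inner ℝ (g k) (x0 - xstar) : ℝ) := by
      have hx' : x k - xstar = (-(γ k • s k)) + (x0 - xstar) := by
        rw [hx k]; abel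
      rw [hx', inner_add_right, inner_neg_right, real_inner_smul_right]
    have hmul : lam k * (f (x k) - f xstar) ≤ lam k * (inner ℝ (g k) (x k - xstar) : ℝ) :=
      mul_le_mul_of_nonneg_left h1 (hlam k).le
    rw [hdec] at hmul
    linarith [hmul]
  -- sum of lam k * inner (g k) (x0 - xstar) equals inner (s (n+1)) (x0 - xstar)
  have hsum_inner : ∀ m : ℕ, (inner ℝ (s (m + 1)) (x0 - xstar) : ℝ)
      = ∑ k ∈ range (m + 1), lam k * (inner ℝ (g k) (x0 - xstar) : ℝ) := by
    intro m
    induction m with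
    | zero =>
      simp only [Nat.zero_add, range_one, sum_singleton]
      rw [hs 0, hs0, zero_add, real_inner_smul_left]
    | succ m ih =>
      rw [sum_range_succ, ← ih, hs (m + 1), inner_add_left, real_inner_smul_left]
  have hcs : (inner ℝ (s (n + 1)) (x0 - xstar) : ℝ) ≤ ‖x0 - xstar‖ * ‖s (n + 1)‖ := by
    calc (inner ℝ (s (n + 1)) (x0 - xstar) : ℝ) ≤ ‖s (n + 1)‖ * ‖x0 - xstar‖ :=
          real_inner_le_norm _ _
      _ = ‖x0 - xstar‖ * ‖s (n + 1)‖ := by ring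
  calc ∑ k ∈ range (n + 1), lam k * (f (x k) - f xstar)
      ≤ ∑ k ∈ range (n + 1), (-(γ k * (lam k * (inner ℝ (g k) (s k) : ℝ)))
          + lam k * (inner ℝ (g k) (x0 - xstar) : ℝ)) :=
        sum_le_sum (fun k _ => hterm k)
    _ = ∑ k ∈ range (n + 1), (-(γ k * (lam k * (inner ℝ (g k) (s k) : ℝ))))
          + ∑ k ∈ range (n + 1), lam k * (inner ℝ (g k) (x0 - xstar) : ℝ) := sum_add_distrib
    _ ≤ (∑ k ∈ range (n + 1), (γ k / 2) * (lam k) ^ 2 * ‖g k‖ ^ 2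
          - (γ (n + 1) / 2) * ‖s (n + 1)‖ ^ 2)
          + (inner ℝ (s (n + 1)) (x0 - xstar) : ℝ) := by
        rw [hsum_inner n]; linarith [key n]
    _ ≤ ‖x0 - xstar‖ * ‖s (n + 1)‖
          + ∑ k ∈ range (n + 1), (γ k / 2) * (lam k) ^ 2 * ‖g k‖ ^ 2
          - (γ (n + 1) / 2) * ‖s (n + 1)‖ ^ 2 := by linarith [hcs]
end

section
/- Under the dual averaging setup (convex $f$ with minimizer $x_*$, $s_0=0$, $s_{k+1}=s_k+\lambda_k g_k$ with $g_k\in\partial f(x_k)$, $x_k = x_0-\gamma_k s_k$, non-increasing positive step sizes $\gamma_k$), if $s_{n+1}\neq 0$ then the distance $D=\|x_0-x_*\|$ satisfies the lower bound $D \geq \frac{\gamma_{n+1}\|s_{n+1}\|^2 - \sum_{k=0}^{n}\gamma_k\lambda_k^2\|g_k\|^2}{2\|s_{n+1}\|}$. -/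
open Finset

theorem stmt2 (p n : ℕ) (f : EuclideanSpace ℝ (Fin p) → ℝ)
    (hconv : ConvexOn ℝ Set.univ f)
    (xstar x0 : EuclideanSpace ℝ (Fin p))
    (hmin : ∀ y, f xstar ≤ f y)
    (g s x : ℕ → EuclideanSpace ℝ (Fin p)) (lam γ : ℕ → ℝ)
    (hlam : ∀ k, 0 < lam k)
    (hγpos : ∀ k, 0 < γ k)
    (hγ : ∀ k, γ (k + 1) ≤ γ k)
    (hs0 : s 0 = 0) (hs : ∀ k, s (k + 1) = s k + lam k • g k)
    (hx : ∀ k, x k = x0 - γ k • s k)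
    (hsubgrad : ∀ k, ∀ y, f (x k) + (inner ℝ (g k) (y - x k) : ℝ) ≤ f y)
    (hsne : s (n + 1) ≠ 0) :
    (γ (n + 1) * ‖s (n + 1)‖ ^ 2
        - ∑ k ∈ range (n + 1), γ k * (lam k) ^ 2 * ‖g k‖ ^ 2) / (2 * ‖s (n + 1)‖)
      ≤ ‖x0 - xstar‖ := by
  set D := ‖x0 - xstar‖ with hD
  have hN : (0:ℝ) < ‖s (n + 1)‖ := norm_pos_iff.mpr hsne
  -- subgradient inequality at the minimizer
  have hA : ∀ k, 0 ≤ (inner ℝ (g k) (x k - xstar) : ℝ) := by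
    intro k
    have h1 := hsubgrad k xstar
    have h2 := hmin (x k)
    have h3 : (inner ℝ (g k) (x k - xstar) : ℝ) = - (inner ℝ (g k) (xstar - x k) : ℝ) := by
      rw [← inner_neg_right]
      congr 1
      abel
    linarith [h3.ge, h3.le]
  -- main energy inequality by induction
  have hB : ∀ m, γ m * ‖s m‖ ^ 2 ≤
      (∑ k ∈ range m, γ k * (lam k) ^ 2 * ‖g k‖ ^ 2)
        + 2 * ∑ k ∈ range m, γ k * lam k * (inner ℝ (g k) (s k) : ℝ) := by
    intro m
    induction m with
    | zero => simp [hs0]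
    | succ m ih =>
      have hexp : ‖s (m + 1)‖ ^ 2 =
          ‖s m‖ ^ 2 + 2 * (lam m * (inner ℝ (g m) (s m) : ℝ)) + (lam m) ^ 2 * ‖g m‖ ^ 2 := by
        rw [hs m, norm_add_sq_real, real_inner_smul_right, real_inner_comm, norm_smul,
          Real.norm_eq_abs, mul_pow, sq_abs]
      have h1 : γ (m + 1) * ‖s (m + 1)‖ ^ 2 ≤ γ m * ‖s (m + 1)‖ ^ 2 :=
        mul_le_mul_of_nonneg_right (hγ m) (sq_nonneg _)
      have h2 : γ m * ‖s (m + 1)‖ ^ 2 =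
          γ m * ‖s m‖ ^ 2 + 2 * (γ m * lam m * (inner ℝ (g m) (s m) : ℝ))
            + γ m * (lam m) ^ 2 * ‖g m‖ ^ 2 := by
        rw [hexp]; ring
      rw [sum_range_succ, sum_range_succ]
      linarith
  -- s as a sum
  have hsum : ∀ m, s m = ∑ k ∈ range m, lam k • g k := by
    intro m
    induction m with
    | zero => simp [hs0]
    | succ m ih => rw [hs, sum_range_succ, ih]
  have hC : (inner ℝ (s (n + 1)) (x0 - xstar) : ℝ)
      = ∑ k ∈ range (n + 1), lam k * (inner ℝ (g k) (x0 - xstar) : ℝ) := by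
    rw [hsum, sum_inner]
    simp [real_inner_smul_left, mul_sum, mul_assoc]
  have hCS : (inner ℝ (s (n + 1)) (x0 - xstar) : ℝ) ≤ ‖s (n + 1)‖ * D :=
    real_inner_le_norm _ _
  have hDk : ∀ k, γ k * lam k * (inner ℝ (g k) (s k) : ℝ)
      ≤ lam k * (inner ℝ (g k) (x0 - xstar) : ℝ) := by
    intro k
    have hsplit : (inner ℝ (g k) (x0 - xstar) : ℝ)
        = γ k * (inner ℝ (g k) (s k) : ℝ) + (inner ℝ (g k) (x k - xstar) : ℝ) := by
      have hx0 : x0 - xstar = γ k • s k + (x k - xstar) := by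
        rw [hx k]; abel
      rw [hx0, inner_add_right, real_inner_smul_right]
    have h1 := hA k
    have h2 := (hlam k).le
    nlinarith [mul_nonneg h2 h1]
  have hsumle : ∑ k ∈ range (n + 1), γ k * lam k * (inner ℝ (g k) (s k) : ℝ)
      ≤ ‖s (n + 1)‖ * D := by
    calc ∑ k ∈ range (n + 1), γ k * lam k * (inner ℝ (g k) (s k) : ℝ)
        ≤ ∑ k ∈ range (n + 1), lam k * (inner ℝ (g k) (x0 - xstar) : ℝ) :=
          sum_le_sum fun k _ => hDk k
      _ = (inner ℝ (s (n + 1)) (x0 - xstar) : ℝ) := hC.symm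
      _ ≤ ‖s (n + 1)‖ * D := hCS
  have hfinal := hB (n + 1)
  rw [div_le_iff₀ (by positivity)]
  linarith
end

section
/- Let $g_0,\dots,g_n$ be vectors in $\mathbb{R}^p$ with $\|g_k\|\leq G$ for all $k$, where $G>0$. Then $\sum_{k=0}^{n}\frac{\|g_k\|^2}{\sqrt{G^2+\sum_{i=0}^{k-1}\|g_i\|^2}} \leq 2\sqrt{\sum_{k=0}^{n}\|g_k\|^2}$. -/
/-!
Writing `S k = ∑ i < k, ‖g i‖²`, the bound `‖g k‖ ≤ G` gives `S (k+1) ≤ G² + S k`, so the `k`-th term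
is at most `‖g k‖² / √(S (k+1)) ≤ 2 (√(S (k+1)) - √(S k))`, and the right-hand sides telescope.
-/

open Finset

theorem div_sqrt_add_le_two_mul_sqrt_add_sub_sqrt {s a : ℝ} (hs : 0 ≤ s) (ha : 0 ≤ a) :
    a / √(s + a) ≤ 2 * (√(s + a) - √s) := by
  rcases ha.eq_or_lt with rfl | ha_pos
  · simp
  have hsqrt_pos : 0 < √(s + a) := Real.sqrt_pos.mpr (by linarith)
  have hsa : √(s + a) ^ 2 = s + a := Real.sq_sqrt (by linarith)
  have hs' : √s ^ 2 = s := Real.sq_sqrt hs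
  rw [div_le_iff₀ hsqrt_pos]
  -- with `x = √(s + a)` and `y = √s`, the gap `2 (x - y) x - a` equals `(x - y) ^ 2`
  nlinarith [sq_nonneg (√(s + a) - √s)]

theorem sum_div_sqrt_add_partial_sum_le {a : ℕ → ℝ} {c : ℝ} {N : ℕ}
    (ha : ∀ k ∈ range N, 0 ≤ a k) (hac : ∀ k ∈ range N, a k ≤ c) :
    ∑ k ∈ range N, a k / √(c + ∑ i ∈ range k, a i) ≤ 2 * √(∑ k ∈ range N, a k) := by
  set S : ℕ → ℝ := fun k => ∑ i ∈ range k, a i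
  have hS : ∀ k ∈ range N, 0 ≤ S k := fun k hk =>
    sum_nonneg fun i hi => ha i (range_subset_range.mpr (mem_range_le hk) hi)
  have hterm : ∀ k ∈ range N, a k / √(c + S k) ≤ 2 * (√(S (k + 1)) - √(S k)) := by
    intro k hk
    have hSsucc : S (k + 1) = S k + a k := sum_range_succ a k
    calc a k / √(c + S k) ≤ a k / √(S k + a k) := by
          rcases (ha k hk).eq_or_lt with h0 | hpos
          · simp [← h0]
          · exact div_le_div_of_nonneg_left (ha k hk)
              (Real.sqrt_pos.mpr (by linarith [hS k hk]))
              (Real.sqrt_le_sqrt (by linarith [hac k hk]))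
      _ ≤ 2 * (√(S (k + 1)) - √(S k)) :=
          hSsucc ▸ div_sqrt_add_le_two_mul_sqrt_add_sub_sqrt (hS k hk) (ha k hk)
  calc ∑ k ∈ range N, a k / √(c + S k)
      ≤ ∑ k ∈ range N, 2 * (√(S (k + 1)) - √(S k)) := sum_le_sum hterm
    _ = 2 * √(S N) := by
        rw [← mul_sum, sum_range_sub (fun k => √(S k))]
        simp [S]

theorem stmt4_general (p n : ℕ) (g : ℕ → EuclideanSpace ℝ (Fin p)) (G : ℝ)
    (hg : ∀ k ≤ n, ‖g k‖ ≤ G) :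
    ∑ k ∈ range (n + 1), ‖g k‖ ^ 2 / Real.sqrt (G ^ 2 + ∑ i ∈ range k, ‖g i‖ ^ 2)
      ≤ 2 * Real.sqrt (∑ k ∈ range (n + 1), ‖g k‖ ^ 2) := by
  refine sum_div_sqrt_add_partial_sum_le (fun k _ => sq_nonneg _) fun k hk => ?_
  exact pow_le_pow_left₀ (norm_nonneg _) (hg k (Nat.lt_succ_iff.mp (mem_range.mp hk))) 2

theorem stmt4 (p n : ℕ) (g : ℕ → EuclideanSpace ℝ (Fin p)) (G : ℝ) (hG : 0 < G)
    (hg : ∀ k ≤ n, ‖g k‖ ≤ G) :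
    ∑ k ∈ range (n + 1), ‖g k‖ ^ 2 / Real.sqrt (G ^ 2 + ∑ i ∈ range k, ‖g i‖ ^ 2)
      ≤ 2 * Real.sqrt (∑ k ∈ range (n + 1), ‖g k‖ ^ 2) :=
  stmt4_general p n g G hg
end

section
/- Let $g_0,\dots,g_n$ be vectors in $\mathbb{R}^p$ with $\|g_k\|\leq G$ for all $k$, where $G>0$, and define $\gamma_k = \frac{1}{\sqrt{G^2+\sum_{i=0}^{k-1}\|g_i\|^2}}$ and $\gamma_{n+1} = \frac{1}{\sqrt{G^2+\sum_{i=0}^{n}\|g_i\|^2}}$. Then $\sum_{k=0}^{n}\frac{\gamma_k}{2}\|g_k\|^2 \leq \gamma_{n+1}\left(G^2+\sum_{k=0}^{n}\|g_k\|^2\right)$. -/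
open Finset

lemma stmt5_aux (s s' a G : ℝ) (hs : 0 < s) (hss' : s ≤ s')
    (hsq : s' ^ 2 = s ^ 2 + a) (ha : 0 ≤ a) (haG : a ≤ G ^ 2) :
    s - G ^ 2 / (2 * s) + a / (2 * s) ≤ s' - G ^ 2 / (2 * s') := by
  have hs' : 0 < s' := lt_of_lt_of_le hs hss'
  have h1 : s - G ^ 2 / (2 * s) + a / (2 * s) = s + (a - G ^ 2) / (2 * s) := by
    field_simp; ring
  rw [h1]
  have h2 : (a - G ^ 2) / (2 * s) ≤ (a - G ^ 2) / (2 * s') := by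
    rw [div_le_div_iff₀ (by positivity) (by positivity)]
    nlinarith
  have key : a / (2 * s') ≤ s' - s := by
    rw [div_le_iff₀ (by positivity)]
    nlinarith
  have hsplit : (a - G ^ 2) / (2 * s') = a / (2 * s') - G ^ 2 / (2 * s') :=
    sub_div _ _ _
  linarith

theorem stmt5 (p n : ℕ) (g : ℕ → EuclideanSpace ℝ (Fin p)) (G : ℝ) (hG : 0 < G)
    (hg : ∀ k ≤ n, ‖g k‖ ≤ G)
    (γ : ℕ → ℝ)
    (hγ : ∀ k, γ k = 1 / Real.sqrt (G ^ 2 + ∑ i ∈ range k, ‖g i‖ ^ 2)) :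
    ∑ k ∈ range (n + 1), (γ k / 2) * ‖g k‖ ^ 2
      ≤ γ (n + 1) * (G ^ 2 + ∑ k ∈ range (n + 1), ‖g k‖ ^ 2) := by
  set b : ℕ → ℝ := fun m => G ^ 2 + ∑ i ∈ range m, ‖g i‖ ^ 2 with hb
  have hbpos : ∀ m, 0 < b m := by
    intro m
    have : 0 ≤ ∑ i ∈ range m, ‖g i‖ ^ 2 :=
      Finset.sum_nonneg fun i _ => sq_nonneg _
    simp only [hb]; positivity
  have hsqpos : ∀ m, 0 < Real.sqrt (b m) := fun m => Real.sqrt_pos.mpr (hbpos m)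
  have main : ∀ m, m ≤ n + 1 →
      ∑ k ∈ range m, (γ k / 2) * ‖g k‖ ^ 2
        ≤ Real.sqrt (b m) - G ^ 2 / (2 * Real.sqrt (b m)) := by
    intro m hm
    induction m with
    | zero =>
      simp only [range_zero, sum_empty]
      have : b 0 = G ^ 2 := by simp [hb]
      rw [this, Real.sqrt_sq hG.le]
      have : G ^ 2 / (2 * G) = G / 2 := by
        field_simp
      rw [this]; linarith
    | succ m ih =>
      have hm' : m ≤ n := Nat.lt_succ_iff.mp hm
      have ih' := ih (le_of_lt (Nat.lt_of_lt_of_le (Nat.lt_succ_self m) hm))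
      rw [Finset.sum_range_succ]
      have hbm : Real.sqrt (b m) = Real.sqrt (G ^ 2 + ∑ i ∈ range m, ‖g i‖ ^ 2) := by
        rw [hb]
      have hγm : γ m / 2 * ‖g m‖ ^ 2 = ‖g m‖ ^ 2 / (2 * Real.sqrt (b m)) := by
        rw [hγ m, ← hbm]; ring
      rw [hγm]
      have hsq : Real.sqrt (b (m + 1)) ^ 2 = Real.sqrt (b m) ^ 2 + ‖g m‖ ^ 2 := by
        rw [Real.sq_sqrt (hbpos _).le, Real.sq_sqrt (hbpos _).le]
        simp only [hb, Finset.sum_range_succ]; ring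
      have hss' : Real.sqrt (b m) ≤ Real.sqrt (b (m + 1)) := by
        apply Real.sqrt_le_sqrt
        simp only [hb, Finset.sum_range_succ]
        nlinarith [sq_nonneg ‖g m‖]
      have haG : ‖g m‖ ^ 2 ≤ G ^ 2 := by
        have := hg m hm'
        nlinarith [norm_nonneg (g m)]
      have := stmt5_aux (Real.sqrt (b m)) (Real.sqrt (b (m + 1))) (‖g m‖ ^ 2) G
        (hsqpos m) hss' hsq (sq_nonneg _) haG
      linarith
  have final := main (n + 1) le_rfl
  have hrhs : γ (n + 1) * (G ^ 2 + ∑ k ∈ range (n + 1), ‖g k‖ ^ 2)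
      = Real.sqrt (b (n + 1)) := by
    rw [hγ]
    rw [one_div, inv_mul_eq_div]
    exact Real.div_sqrt
  rw [hrhs]
  have : 0 < G ^ 2 / (2 * Real.sqrt (b (n + 1))) := by positivity
  linarith
end

section
/- Let $d_0 \leq d_1 \leq \dots \leq d_{N+1}$ be a non-decreasing sequence of positive reals, and assume $N+1 \geq 2\log_2(d_{N+1}/d_0)$. Then $\min_{n\leq N}\frac{d_{n+1}}{\sum_{k=0}^{n}d_k} \leq 4\frac{\log_{2+}(d_{N+1}/d_0)}{N+1}$, where $\log_{2+}(x) = \max(1, \log_2 x)$. -/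
open Finset

lemma two_rpow_le_one_add {u : ℝ} (h0 : 0 ≤ u) (h1 : u ≤ 1) :
    (2:ℝ) ^ u ≤ 1 + u := by
  have h := convexOn_exp.2 (Set.mem_univ (0:ℝ)) (Set.mem_univ (Real.log 2))
    (by linarith : (0:ℝ) ≤ 1 - u) h0 (by ring)
  simp only [smul_eq_mul, mul_zero, zero_add, Real.exp_zero, mul_one,
    Real.exp_log (by norm_num : (0:ℝ) < 2)] at h
  rw [Real.rpow_def_of_pos (by norm_num : (0:ℝ) < 2), mul_comm]
  linarith

set_option maxHeartbeats 2000000 in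
theorem stmt6 (N : ℕ) (d : ℕ → ℝ)
    (hpos : ∀ k, 0 < d k)
    (hmono : ∀ k, d k ≤ d (k + 1))
    (hN : (2 : ℝ) * Real.logb 2 (d (N + 1) / d 0) ≤ (N : ℝ) + 1) :
    ∃ n ≤ N, d (n + 1) / (∑ k ∈ range (n + 1), d k)
      ≤ 4 * max 1 (Real.logb 2 (d (N + 1) / d 0)) / ((N : ℝ) + 1) := by
  by_contra hcon
  push_neg at hcon
  set ℓ : ℝ := Real.logb 2 (d (N + 1) / d 0) with hℓdef
  set L : ℝ := max 1 ℓ with hLdef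
  have hd0 : 0 < d 0 := hpos 0
  have hmono' : Monotone d := monotone_nat_of_le_succ hmono
  have hratio1 : (1:ℝ) ≤ d (N+1) / d 0 := (one_le_div hd0).2 (hmono' (Nat.zero_le _))
  have hℓ0 : 0 ≤ ℓ := Real.logb_nonneg one_lt_two hratio1
  have hL1 : (1:ℝ) ≤ L := le_max_left _ _
  have hL0 : (0:ℝ) < L := by linarith
  have hℓL : ℓ ≤ L := le_max_right _ _
  have hA0 : (0:ℝ) < (N:ℝ)+1 := by positivity
  set c : ℝ := 4 * L / ((N:ℝ)+1) with hcdef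
  have hc0 : 0 < c := by positivity
  have key : ∀ n, n ≤ N → c * (∑ k ∈ range (n+1), d k) < d (n+1) := by
    intro n hn
    have hS : 0 < ∑ k ∈ range (n+1), d k :=
      Finset.sum_pos (fun k _ => hpos k) (by simp)
    have h := hcon n hn
    rw [lt_div_iff₀ hS] at h
    linarith
  have block : ∀ m t', 1 ≤ t' → m + t' ≤ N + 1 → c * t' * d m < d (m + t') := by
    intro m t' ht1 hmt
    have hn : m + t' - 1 ≤ N := by omega
    have h1 := key (m + t' - 1) hn
    have he : m + t' - 1 + 1 = m + t' := by omega
    rw [he] at h1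
    have hsub : Finset.Ico m (m+t') ⊆ range (m+t') := by
      intro x hx
      simp only [Finset.mem_Ico] at hx
      simp only [Finset.mem_range]
      omega
    have h2 : (t' : ℝ) * d m ≤ ∑ k ∈ range (m+t'), d k := by
      calc (t':ℝ) * d m = ∑ _k ∈ Finset.Ico m (m+t'), d m := by
            rw [Finset.sum_const, Nat.card_Ico, nsmul_eq_mul]
            congr 1
            push_cast [Nat.add_sub_cancel_left]
            ring
        _ ≤ ∑ k ∈ Finset.Ico m (m+t'), d k :=
            Finset.sum_le_sum (fun k hk => hmono' (Finset.mem_Ico.1 hk).1)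
        _ ≤ ∑ k ∈ range (m+t'), d k :=
            Finset.sum_le_sum_of_subset_of_nonneg hsub (fun k _ _ => (hpos k).le)
    calc c * t' * d m = c * ((t':ℝ) * d m) := by ring
      _ ≤ c * ∑ k ∈ range (m+t'), d k := mul_le_mul_of_nonneg_left h2 hc0.le
      _ < d (m+t') := h1
  set t : ℕ := ⌈((N:ℝ)+1) / (2*L)⌉₊ with htdef
  have ht1 : 1 ≤ t := Nat.one_le_iff_ne_zero.2 (by
    have : (0:ℝ) < ((N:ℝ)+1) / (2*L) := by positivity
    exact Nat.ceil_pos.2 this |>.ne')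
  have ht0' : (0:ℝ) < (t:ℝ) := by exact_mod_cast ht1
  have htle : ((N:ℝ)+1)/(2*L) ≤ (t:ℝ) := Nat.le_ceil _
  have htA : t ≤ N + 1 := by
    apply Nat.ceil_le.2
    rw [div_le_iff₀ (by positivity)]
    push_cast
    nlinarith
  set j : ℕ := (N+1) / t with hjdef
  have hj1 : 1 ≤ j := (Nat.one_le_div_iff (by omega)).2 htA
  have hjt : j * t ≤ N + 1 := Nat.div_mul_le_self _ _
  have hAlt : N + 1 < (j+1) * t := by
    have h1 := Nat.div_add_mod (N+1) t
    have h2 : (N+1) % t < t := Nat.mod_lt _ (by omega)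
    have h3 : (j+1)*t = t*((N+1)/t) + t := by rw [hjdef]; ring
    omega
  have hct2 : (2:ℝ) ≤ c * t := by
    have h1 : c * (((N:ℝ)+1)/(2*L)) ≤ c * t := mul_le_mul_of_nonneg_left htle hc0.le
    have h2 : c * (((N:ℝ)+1)/(2*L)) = 2 := by
      rw [hcdef]; field_simp; ring
    linarith
  have hct0 : (0:ℝ) < c * t := by linarith
  have hcase : ((N:ℝ)+1 ≤ 2*L) → j = N + 1 := by
    intro hle
    have ht1' : t = 1 := by
      have h4 : ⌈((N:ℝ)+1) / (2*L)⌉₊ ≤ 1 := Nat.ceil_le.2 (by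
        push_cast
        rw [div_le_one (by positivity)]
        linarith)
      omega
    rw [hjdef, ht1', Nat.div_one]
  have htceil : (t:ℝ) < ((N:ℝ)+1)/(2*L) + 1 := Nat.ceil_lt_add_one (by positivity)
  have h2l : d (N+1)/d 0 = (2:ℝ) ^ ℓ :=
    (Real.rpow_logb (by norm_num) (by norm_num) (by positivity)).symm
  clear_value ℓ L c t j
  clear htdef hjdef hℓdef hLdef
  have ind : ∀ i, 1 ≤ i → i * t ≤ N + 1 → (c*(t:ℝ))^i * d 0 < d (i*t) := by
    intro i
    induction i with
    | zero => intro h; omega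
    | succ n ih =>
      intro _ hle
      rcases Nat.eq_zero_or_pos n with hn0 | hn1
      · subst hn0
        have := block 0 t ht1 (by omega)
        simpa using this
      · have hle' : n * t + t ≤ N + 1 := by rw [add_one_mul] at hle; omega
        have hnt : n * t ≤ N + 1 := by omega
        have h1 := ih hn1 hnt
        have h2 := block (n*t) t ht1 hle'

        have h3 : c * (t:ℝ) * ((c*(t:ℝ))^n * d 0) < c * (t:ℝ) * d (n*t) :=
          mul_lt_mul_of_pos_left h1 hct0
        calc (c*(t:ℝ))^(n+1) * d 0 = c * (t:ℝ) * ((c*(t:ℝ))^n * d 0) := by ring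
          _ < c * (t:ℝ) * d (n*t) := h3
          _ < d (n*t + t) := h2
          _ = d ((n+1)*t) := by rw [add_one_mul]
  have hfin : (c*(t:ℝ))^j * d 0 < d (N+1) :=
    lt_of_lt_of_le (ind j hj1 hjt) (hmono' hjt)
  have hlog1 : 1 ≤ Real.logb 2 (c * t) := by
    rw [Real.le_logb_iff_rpow_le one_lt_two hct0]
    simpa using hct2
  have hjr0 : (0:ℝ) ≤ (j:ℝ) := Nat.cast_nonneg _
  have main : ℓ ≤ (j:ℝ) * Real.logb 2 (c * t) := by
    rcases le_or_gt ℓ (j:ℝ) with h | h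
    · calc ℓ ≤ (j:ℝ) := h
        _ = (j:ℝ) * 1 := (mul_one _).symm
        _ ≤ (j:ℝ) * Real.logb 2 (c*t) := mul_le_mul_of_nonneg_left hlog1 hjr0
    · -- j < ℓ ≤ L ; show ℓ ≤ L ≤ j * logb 2 (ct)
      have hA2L : 2 * L < (N:ℝ) + 1 := by
        by_contra hle
        push_neg at hle
        have hjA : j = N + 1 := hcase hle
        have hjr : ((j:ℝ)) = (N:ℝ) + 1 := by rw [hjA]; push_cast; ring
        rw [hjr] at h
        linarith
      have h3 : ((N:ℝ)+1) < ((j:ℝ)+1) * (t:ℝ) := by exact_mod_cast hAlt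
      have hLj1 : L < (j:ℝ) + 1 := by
        have h1 := htceil
        have h2 : L * t < (N:ℝ)+1 := by
          have : L * (t:ℝ) < L * (((N:ℝ)+1)/(2*L) + 1) := mul_lt_mul_of_pos_left h1 hL0
          have he : L * (((N:ℝ)+1)/(2*L) + 1) = ((N:ℝ)+1)/2 + L := by
            field_simp
          rw [he] at this
          linarith
        nlinarith
      have hjr1 : (1:ℝ) ≤ (j:ℝ) := by exact_mod_cast hj1
      have hjL : (j:ℝ) < L := lt_of_lt_of_le h hℓL
      have hctgt : 4*L/((j:ℝ)+1) < c * t := by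
        rw [div_lt_iff₀ (by positivity), hcdef]
        rw [div_mul_eq_mul_div, div_mul_eq_mul_div, lt_div_iff₀ hA0]
        nlinarith [mul_lt_mul_of_pos_left h3 (by positivity : (0:ℝ) < 4*L)]
      have hx1 : 1 ≤ L / (j:ℝ) := (one_le_div (by linarith)).2 hjL.le
      have hx2 : L / (j:ℝ) ≤ 2 := by
        rw [div_le_iff₀ (by linarith)]
        nlinarith
      have hpow : (2:ℝ) ^ (L/(j:ℝ)) ≤ 2 * (L/(j:ℝ)) := by
        have hu := two_rpow_le_one_add (u := L/(j:ℝ) - 1) (by linarith) (by linarith)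
        have he : (2:ℝ) * (2:ℝ)^(L/(j:ℝ) - 1) = (2:ℝ)^(L/(j:ℝ)) := by
          rw [show (2:ℝ) * (2:ℝ)^(L/(j:ℝ)-1) = (2:ℝ)^(1:ℝ) * (2:ℝ)^(L/(j:ℝ)-1) by
                rw [Real.rpow_one],
              ← Real.rpow_add (by norm_num : (0:ℝ) < 2)]
          norm_num
        rw [← he]
        linarith
      have hmid : 2 * (L/(j:ℝ)) ≤ 4*L/((j:ℝ)+1) := by
        rw [mul_div_assoc' (2:ℝ) L, div_le_div_iff₀ (by linarith : (0:ℝ) < (j:ℝ)) (by positivity)]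
        nlinarith [mul_nonneg hL0.le (sub_nonneg.2 hjr1)]
      have hfinal : (2:ℝ)^(L/(j:ℝ)) < c * t :=
        lt_of_le_of_lt (hpow.trans hmid) hctgt
      have hlg : L/(j:ℝ) < Real.logb 2 (c*t) :=
        (Real.lt_logb_iff_rpow_lt one_lt_two hct0).2 hfinal
      calc ℓ ≤ L := hℓL
        _ = (j:ℝ) * (L/(j:ℝ)) := by field_simp
        _ ≤ (j:ℝ) * Real.logb 2 (c*t) := mul_le_mul_of_nonneg_left hlg.le hjr0
  have hup : (2:ℝ)^ℓ ≤ (c*(t:ℝ))^j := by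
    calc (2:ℝ)^ℓ ≤ (2:ℝ)^((j:ℝ) * Real.logb 2 (c*t)) :=
          (Real.rpow_le_rpow_left_iff one_lt_two).2 main
      _ = ((2:ℝ)^(Real.logb 2 (c*t)))^(j:ℝ) := by
          rw [mul_comm ((j:ℝ)) (Real.logb 2 (c*(t:ℝ))),
            Real.rpow_mul (by norm_num : (0:ℝ) ≤ 2)]
      _ = (c*t)^(j:ℝ) := by rw [Real.rpow_logb (by norm_num) (by norm_num) hct0]
      _ = (c*(t:ℝ))^j := Real.rpow_natCast _ _
  have hle : d (N+1) ≤ (c*(t:ℝ))^j * d 0 := by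
    have : d (N+1)/d 0 ≤ (c*(t:ℝ))^j := h2l ▸ hup
    rw [div_le_iff₀ hd0] at this
    linarith
  linarith
end

section
/- Let $g_0,\dots,g_n$ be vectors in $\mathbb{R}^p$ with $\|g_k\|\leq G$ for all $k$, where $G>0$. Then $\sum_{k=0}^{n}\frac{\|g_k\|^2}{G^2+\sum_{i=0}^{k}\|g_i\|^2} \leq \log(n+2)$. -/
open Finset

lemma aux_log {x y : ℝ} (hy : 0 < y) (hxy : y ≤ x) :
    (x - y) / x ≤ Real.log x - Real.log y := by
  have hx : 0 < x := hy.trans_le hxy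
  have h := Real.log_le_sub_one_of_pos (div_pos hy hx)
  rw [Real.log_div hy.ne' hx.ne'] at h
  have hne : x ≠ 0 := hx.ne'
  have : y / x - 1 = -((x - y) / x) := by field_simp; ring
  linarith

theorem stmt8 (p n : ℕ) (g : ℕ → EuclideanSpace ℝ (Fin p)) (G : ℝ) (hG : 0 < G)
    (hg : ∀ k ≤ n, ‖g k‖ ≤ G) :
    ∑ k ∈ range (n + 1), ‖g k‖ ^ 2 / (G ^ 2 + ∑ i ∈ range (k + 1), ‖g i‖ ^ 2)
      ≤ Real.log ((n : ℝ) + 2) := by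
  set a : ℕ → ℝ := fun k => ‖g k‖ ^ 2 with ha
  have ha0 : ∀ k, 0 ≤ a k := fun k => sq_nonneg _
  have hS0 : ∀ m, 0 ≤ ∑ i ∈ range m, a i := fun m =>
    Finset.sum_nonneg fun i _ => ha0 i
  have hG2 : 0 < G ^ 2 := pow_pos hG 2
  have key : ∀ m : ℕ, ∑ k ∈ range m, a k / (G ^ 2 + ∑ i ∈ range (k + 1), a i)
      ≤ Real.log (G ^ 2 + ∑ i ∈ range m, a i) - Real.log (G ^ 2) := by
    intro m
    induction m with
    | zero => simp
    | succ m ih =>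
      rw [Finset.sum_range_succ]
      have hy : 0 < G ^ 2 + ∑ i ∈ range m, a i := by positivity
      have hxy : G ^ 2 + ∑ i ∈ range m, a i ≤ G ^ 2 + ∑ i ∈ range (m + 1), a i := by
        rw [Finset.sum_range_succ]; linarith [ha0 m]
      have h := aux_log hy hxy
      have hd : (G ^ 2 + ∑ i ∈ range (m + 1), a i) - (G ^ 2 + ∑ i ∈ range m, a i) = a m := by
        rw [Finset.sum_range_succ]; ring
      rw [hd] at h
      linarith
  have h1 := key (n + 1)
  have h2 : G ^ 2 + ∑ i ∈ range (n + 1), a i ≤ ((n : ℝ) + 2) * G ^ 2 := by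
    have : ∑ i ∈ range (n + 1), a i ≤ ∑ i ∈ range (n + 1), G ^ 2 := by
      apply Finset.sum_le_sum
      intro i hi
      have h1 := hg i (Nat.lt_succ_iff.mp (Finset.mem_range.mp hi))
      have h2 := norm_nonneg (g i)
      show ‖g i‖ ^ 2 ≤ G ^ 2
      nlinarith
    rw [Finset.sum_const, card_range, nsmul_eq_mul] at this
    push_cast at this ⊢
    nlinarith
  have h3 : Real.log (G ^ 2 + ∑ i ∈ range (n + 1), a i) ≤ Real.log (((n : ℝ) + 2) * G ^ 2) :=
    Real.log_le_log (by positivity) h2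
  rw [Real.log_mul (by positivity) hG2.ne'] at h3
  calc ∑ k ∈ range (n + 1), a k / (G ^ 2 + ∑ i ∈ range (k + 1), a i)
      ≤ Real.log (G ^ 2 + ∑ i ∈ range (n + 1), a i) - Real.log (G ^ 2) := h1
    _ ≤ Real.log ((n : ℝ) + 2) := by linarith
end

section
/- Let $g_0,\dots,g_n$ be vectors in $\mathbb{R}^p$, $\lambda_k$ real numbers, $s_0=0$, $s_{k+1}=s_k+\lambda_k g_k$, and let $A_0, A_1, \dots, A_{n+1}$ be positive definite matrices with $A_{k+1}\succeq A_k$ for all $k$. Then $-\sum_{k=0}^{n}\lambda_k\langle g_k, A_k^{-1}s_k\rangle \leq -\frac{1}{2}\|s_{n+1}\|_{A_{n+1}^{-1}}^2 + \frac{1}{2}\sum_{k=0}^{n}\lambda_k^2\|g_k\|_{A_k^{-1}}^2$. -/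
open Finset Matrix

lemma sym_dot {p : ℕ} (M : Matrix (Fin p) (Fin p) ℝ) (hM : Mᵀ = M)
    (x y : Fin p → ℝ) : x ⬝ᵥ M *ᵥ y = y ⬝ᵥ M *ᵥ x := by
  rw [dotProduct_mulVec, ← mulVec_transpose, hM, dotProduct_comm]

lemma inv_quad_mono {p : ℕ} (A B : Matrix (Fin p) (Fin p) ℝ)
    (hA : A.PosDef) (hB : B.PosDef) (hBA : (B - A).PosSemidef)
    (x : Fin p → ℝ) : x ⬝ᵥ B⁻¹ *ᵥ x ≤ x ⬝ᵥ A⁻¹ *ᵥ x := by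
  have hAs : Aᵀ = A := hA.isHermitian.eq
  set y := B⁻¹ *ᵥ x with hy
  set z := A⁻¹ *ᵥ x with hz
  have hAz : A *ᵥ z = x := by
    rw [hz, mulVec_mulVec, Matrix.mul_nonsing_inv _ ((Matrix.isUnit_iff_isUnit_det A).mp hA.isUnit), one_mulVec]
  have hBy : B *ᵥ y = x := by
    rw [hy, mulVec_mulVec, Matrix.mul_nonsing_inv _ ((Matrix.isUnit_iff_isUnit_det B).mp hB.isUnit), one_mulVec]
  -- x ⬝ B⁻¹ x = y ⬝ B y = 2 y⬝x - y⬝By ≤ 2 y⬝x - y⬝Ay ≤ x⬝A⁻¹x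
  have h1 : x ⬝ᵥ B⁻¹ *ᵥ x = 2 * (y ⬝ᵥ x) - y ⬝ᵥ B *ᵥ y := by
    have : y ⬝ᵥ x = y ⬝ᵥ B *ᵥ y := by rw [hBy]
    rw [dotProduct_comm x y] at *
    linarith
  have h2 : y ⬝ᵥ A *ᵥ y ≤ y ⬝ᵥ B *ᵥ y := by
    have := hBA.dotProduct_mulVec_nonneg y
    simp only [star_trivial, sub_mulVec, dotProduct_sub] at this
    linarith
  have h3 : 0 ≤ (z - y) ⬝ᵥ A *ᵥ (z - y) := by
    have := hA.posSemidef.dotProduct_mulVec_nonneg (z - y)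
    simpa using this
  have hexp : (z - y) ⬝ᵥ A *ᵥ (z - y)
      = z ⬝ᵥ A *ᵥ z - 2 * (y ⬝ᵥ A *ᵥ z) + y ⬝ᵥ A *ᵥ y := by
    have hsym := sym_dot A hAs z y
    simp only [mulVec_sub, sub_mulVec, dotProduct_sub, sub_dotProduct]
    linarith
  have hzx : z ⬝ᵥ A *ᵥ z = x ⬝ᵥ A⁻¹ *ᵥ x := by
    rw [hAz, hz, dotProduct_comm]
  have hyx : y ⬝ᵥ A *ᵥ z = y ⬝ᵥ x := by rw [hAz]
  nlinarith [h3]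

theorem stmt9 (p n : ℕ) (g s : ℕ → Fin p → ℝ) (lam : ℕ → ℝ)
    (A : ℕ → Matrix (Fin p) (Fin p) ℝ)
    (hA : ∀ k, (A k).PosDef)
    (hAmono : ∀ k, (A (k + 1) - A k).PosSemidef)
    (hs0 : s 0 = 0) (hs : ∀ k, s (k + 1) = s k + lam k • g k) :
    -∑ k ∈ range (n + 1), lam k * (g k ⬝ᵥ ((A k)⁻¹ *ᵥ s k))
      ≤ -(1 / 2) * (s (n + 1) ⬝ᵥ ((A (n + 1))⁻¹ *ᵥ s (n + 1)))
        + (1 / 2) * ∑ k ∈ range (n + 1), (lam k) ^ 2 * (g k ⬝ᵥ ((A k)⁻¹ *ᵥ g k)) := by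
  set f : ℕ → ℝ := fun k => (1 / 2) * (s k ⬝ᵥ ((A k)⁻¹ *ᵥ s k)) with hf
  have step : ∀ k, -(lam k * (g k ⬝ᵥ ((A k)⁻¹ *ᵥ s k)))
      ≤ (f k - f (k + 1)) + (1 / 2) * ((lam k) ^ 2 * (g k ⬝ᵥ ((A k)⁻¹ *ᵥ g k))) := by
    intro k
    have hinv : ((A k)⁻¹)ᵀ = (A k)⁻¹ := (hA k).inv.isHermitian.eq
    have hmono := inv_quad_mono (A k) (A (k + 1)) (hA k) (hA (k + 1)) (hAmono k)
      (s (k + 1))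
    have hexp : s (k + 1) ⬝ᵥ ((A k)⁻¹ *ᵥ s (k + 1))
        = s k ⬝ᵥ ((A k)⁻¹ *ᵥ s k) + 2 * (lam k * (g k ⬝ᵥ ((A k)⁻¹ *ᵥ s k)))
          + (lam k) ^ 2 * (g k ⬝ᵥ ((A k)⁻¹ *ᵥ g k)) := by
      have hsym := sym_dot (A k)⁻¹ hinv (s k) (g k)
      rw [hs k]
      simp only [mulVec_add, dotProduct_add, add_dotProduct, mulVec_smul,
        dotProduct_smul, smul_dotProduct, smul_eq_mul]
      rw [hsym]
      ring
    simp only [hf]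
    nlinarith [hmono]
  calc -∑ k ∈ range (n + 1), lam k * (g k ⬝ᵥ ((A k)⁻¹ *ᵥ s k))
      = ∑ k ∈ range (n + 1), -(lam k * (g k ⬝ᵥ ((A k)⁻¹ *ᵥ s k))) := by
        rw [Finset.sum_neg_distrib]
    _ ≤ ∑ k ∈ range (n + 1), ((f k - f (k + 1))
          + (1 / 2) * ((lam k) ^ 2 * (g k ⬝ᵥ ((A k)⁻¹ *ᵥ g k)))) :=
        Finset.sum_le_sum fun k _ => step k
    _ = (f 0 - f (n + 1)) + (1 / 2) * ∑ k ∈ range (n + 1),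
          (lam k) ^ 2 * (g k ⬝ᵥ ((A k)⁻¹ *ᵥ g k)) := by
        rw [Finset.sum_add_distrib, Finset.sum_range_sub' f, ← Finset.mul_sum]
    _ = -(1 / 2) * (s (n + 1) ⬝ᵥ ((A (n + 1))⁻¹ *ᵥ s (n + 1)))
        + (1 / 2) * ∑ k ∈ range (n + 1), (lam k) ^ 2 * (g k ⬝ᵥ ((A k)⁻¹ *ᵥ g k)) := by
        simp [hf, hs0]
end

section
/- Let $f:\mathbb{R}^p\to\mathbb{R}$ be convex with minimizer $x_*$ and minimum $f_*$. Let $x_0\in\mathbb{R}^p$, $\lambda_k>0$, $g_k\in\partial f(x_k)$, $s_0=0$, $s_{k+1}=s_k+\lambda_k g_k$, and let $A_k$ be positive definite diagonal matrices with $A_{k+1}\succeq A_k$, with iterates $x_k = x_0 - A_k^{-1}s_k$. Then $\sum_{k=0}^{n}\lambda_k(f(x_k)-f_*) \leq \|s_{n+1}\|_1\|x_0-x_*\|_\infty - \frac{1}{2}\|s_{n+1}\|_{A_{n+1}^{-1}}^2 + \frac{1}{2}\sum_{k=0}^{n}\lambda_k^2\|g_k\|_{A_k^{-1}}^2$. 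-/
open Finset Matrix

/-! Write `q_k v = ⟪v, A_k⁻¹ v⟫`. Since `x_k - x_* = (x_0 - x_*) - A_k⁻¹ s_k` and
`q_k s_{k+1} = q_k s_k + 2 λ_k ⟪g_k, A_k⁻¹ s_k⟫ + λ_k² q_k g_k`, the subgradient inequality at
`x_*` gives
`λ_k (f x_k - f_*) ≤ λ_k ⟪g_k, x_0 - x_*⟫ + ½ (q_k s_k - q_k s_{k+1}) + ½ λ_k² q_k g_k`.
As `A_{k+1} ⪰ A_k` makes `q_{k+1} ≤ q_k`, summing telescopes to
`⟪s_{n+1}, x_0 - x_*⟫ - ½ q_{n+1} s_{n+1} + ½ ∑ λ_k² q_k g_k`, and Hölder's inequality bounds the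
first term by `‖s_{n+1}‖₁ ‖x_0 - x_*‖_∞`. -/

section DualAveraging

variable {ι : Type*} [Fintype ι]

lemma Matrix.inv_diagonal_of_ne_zero [DecidableEq ι] {K : Type*} [Field K] {d : ι → K}
    (hd : ∀ i, d i ≠ 0) : (diagonal d)⁻¹ = diagonal d⁻¹ :=
  inv_eq_left_inv <| by
    rw [diagonal_mul_diagonal, ← diagonal_one]
    exact congrArg diagonal (funext fun i => inv_mul_cancel₀ (hd i))

lemma Matrix.dotProduct_diagonal_mulVec_self_le [DecidableEq ι] {d d' : ι → ℝ} (h : d ≤ d')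
    (v : ι → ℝ) : v ⬝ᵥ (diagonal d *ᵥ v) ≤ v ⬝ᵥ (diagonal d' *ᵥ v) := by
  simp only [mulVec_diagonal, dotProduct]
  exact sum_le_sum fun i _ => by nlinarith [h i, mul_self_nonneg (v i)]

lemma Matrix.IsSymm.dotProduct_mulVec_comm {R : Type*} [CommSemiring R] {M : Matrix ι ι R}
    (hM : M.IsSymm) (u v : ι → R) :
    u ⬝ᵥ (M *ᵥ v) = v ⬝ᵥ (M *ᵥ u) := by
  rw [dotProduct_mulVec, dotProduct_comm, ← mulVec_transpose, hM.eq]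

lemma Matrix.IsSymm.add_dotProduct_mulVec_add {R : Type*} [CommSemiring R] {M : Matrix ι ι R}
    (hM : M.IsSymm) (u v : ι → R) :
    (u + v) ⬝ᵥ (M *ᵥ (u + v))
      = u ⬝ᵥ (M *ᵥ u) + 2 * (v ⬝ᵥ (M *ᵥ u)) + v ⬝ᵥ (M *ᵥ v) := by
  rw [mulVec_add, dotProduct_add, add_dotProduct, add_dotProduct, hM.dotProduct_mulVec_comm u v]
  ring

lemma dotProduct_le_sum_abs_mul_norm (u v : ι → ℝ) : u ⬝ᵥ v ≤ (∑ i, |u i|) * ‖v‖ := by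
  rw [dotProduct, sum_mul]
  refine sum_le_sum fun i _ => ?_
  calc u i * v i ≤ |u i| * |v i| := by rw [← abs_mul]; exact le_abs_self _
    _ ≤ |u i| * ‖v‖ := by gcongr; exact norm_le_pi_norm v i

lemma dualAveraging_step (f : (ι → ℝ) → ℝ) {B : Matrix ι ι ℝ} (hB : B.IsSymm)
    {x₀ xstar s g : ι → ℝ} {lam : ℝ} (hlam : 0 ≤ lam)
    (hsub : f (x₀ - B *ᵥ s) + g ⬝ᵥ (xstar - (x₀ - B *ᵥ s)) ≤ f xstar) :
    lam * (f (x₀ - B *ᵥ s) - f xstar)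
      ≤ lam * (g ⬝ᵥ (x₀ - xstar))
        + (1 / 2) * (s ⬝ᵥ (B *ᵥ s) - (s + lam • g) ⬝ᵥ (B *ᵥ (s + lam • g)))
        + (1 / 2) * (lam ^ 2 * (g ⬝ᵥ (B *ᵥ g))) := by
  have hgap : f (x₀ - B *ᵥ s) - f xstar ≤ g ⬝ᵥ (x₀ - xstar) - g ⬝ᵥ (B *ᵥ s) := by
    have : g ⬝ᵥ (xstar - (x₀ - B *ᵥ s)) = -(g ⬝ᵥ (x₀ - xstar)) + g ⬝ᵥ (B *ᵥ s) := by
      rw [← dotProduct_neg, ← dotProduct_add]; congr 1; abel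
    linarith
  have hexpand := hB.add_dotProduct_mulVec_add s (lam • g)
  simp only [smul_dotProduct, mulVec_smul, dotProduct_smul, smul_eq_mul] at hexpand
  linarith [mul_le_mul_of_nonneg_left hgap hlam]

theorem dualAveraging_regret_le (f : (ι → ℝ) → ℝ) (xstar x₀ : ι → ℝ) (g s x : ℕ → ι → ℝ)
    (lam : ℕ → ℝ) (hlam : ∀ k, 0 ≤ lam k) (B : ℕ → Matrix ι ι ℝ) (hB : ∀ k, (B k).IsSymm)
    (hBanti : ∀ k v, v ⬝ᵥ (B (k + 1) *ᵥ v) ≤ v ⬝ᵥ (B k *ᵥ v))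
    (hs0 : s 0 = 0) (hs : ∀ k, s (k + 1) = s k + lam k • g k)
    (hx : ∀ k, x k = x₀ - B k *ᵥ s k)
    (hsub : ∀ k, f (x k) + g k ⬝ᵥ (xstar - x k) ≤ f xstar) (n : ℕ) :
    ∑ k ∈ range n, lam k * (f (x k) - f xstar)
      ≤ s n ⬝ᵥ (x₀ - xstar) - (1 / 2) * (s n ⬝ᵥ (B n *ᵥ s n))
        + (1 / 2) * ∑ k ∈ range n, lam k ^ 2 * (g k ⬝ᵥ (B k *ᵥ g k)) := by
  induction n with
  | zero => simp [hs0]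
  | succ n ih =>
    have hstep := dualAveraging_step f (hB n) (hlam n) (hx n ▸ hsub n)
    rw [← hx n, ← hs n] at hstep
    have hdual : s (n + 1) ⬝ᵥ (x₀ - xstar)
        = s n ⬝ᵥ (x₀ - xstar) + lam n * (g n ⬝ᵥ (x₀ - xstar)) := by
      rw [hs n, add_dotProduct, smul_dotProduct, smul_eq_mul]
    rw [sum_range_succ, sum_range_succ, hdual]
    linarith [hBanti n (s (n + 1))]

end DualAveraging

theorem stmt10_general (p n : ℕ) (f : (Fin p → ℝ) → ℝ)
    (xstar x0 : Fin p → ℝ)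
    (g s x : ℕ → Fin p → ℝ) (lam : ℕ → ℝ)
    (hlam : ∀ k, 0 < lam k)
    (a : ℕ → Fin p → ℝ)
    (ha : ∀ k i, 0 < a k i)
    (hamono : ∀ k i, a k i ≤ a (k + 1) i)
    (A : ℕ → Matrix (Fin p) (Fin p) ℝ)
    (hAdiag : ∀ k, A k = Matrix.diagonal (a k))
    (hs0 : s 0 = 0) (hs : ∀ k, s (k + 1) = s k + lam k • g k)
    (hx : ∀ k, x k = x0 - (A k)⁻¹ *ᵥ s k)
    (hsubgrad : ∀ k, ∀ y, f (x k) + g k ⬝ᵥ (y - x k) ≤ f y) :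
    ∑ k ∈ range (n + 1), lam k * (f (x k) - f xstar)
      ≤ (∑ i, |s (n + 1) i|) * ‖x0 - xstar‖
        - (1 / 2) * (s (n + 1) ⬝ᵥ ((A (n + 1))⁻¹ *ᵥ s (n + 1)))
        + (1 / 2) * ∑ k ∈ range (n + 1), (lam k) ^ 2 * (g k ⬝ᵥ ((A k)⁻¹ *ᵥ g k)) := by
  have hAinv (k : ℕ) : (A k)⁻¹ = diagonal (a k)⁻¹ := by
    rw [hAdiag, inv_diagonal_of_ne_zero fun i => (ha k i).ne']
  have hBanti (k : ℕ) (v : Fin p → ℝ) :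
      v ⬝ᵥ ((A (k + 1))⁻¹ *ᵥ v) ≤ v ⬝ᵥ ((A k)⁻¹ *ᵥ v) := by
    rw [hAinv, hAinv]
    exact dotProduct_diagonal_mulVec_self_le (fun i => inv_anti₀ (ha k i) (hamono k i)) v
  have hregret := dualAveraging_regret_le f xstar x0 g s x lam (fun k => (hlam k).le)
    (fun k => (A k)⁻¹) (fun k => hAinv k ▸ isSymm_diagonal _) hBanti hs0 hs hx
    (fun k => hsubgrad k xstar) (n + 1)
  linarith [dotProduct_le_sum_abs_mul_norm (s (n + 1)) (x0 - xstar)]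

theorem stmt10 (p n : ℕ) (f : (Fin p → ℝ) → ℝ)
    (hconv : ConvexOn ℝ Set.univ f)
    (xstar x0 : Fin p → ℝ)
    (hmin : ∀ y, f xstar ≤ f y)
    (g s x : ℕ → Fin p → ℝ) (lam : ℕ → ℝ)
    (hlam : ∀ k, 0 < lam k)
    (a : ℕ → Fin p → ℝ)
    (ha : ∀ k i, 0 < a k i)
    (hamono : ∀ k i, a k i ≤ a (k + 1) i)
    (A : ℕ → Matrix (Fin p) (Fin p) ℝ)
    (hAdiag : ∀ k, A k = Matrix.diagonal (a k))
    (hs0 : s 0 = 0) (hs : ∀ k, s (k + 1) = s k + lam k • g k)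
    (hx : ∀ k, x k = x0 - (A k)⁻¹ *ᵥ s k)
    (hsubgrad : ∀ k, ∀ y, f (x k) + g k ⬝ᵥ (y - x k) ≤ f y) :
    ∑ k ∈ range (n + 1), lam k * (f (x k) - f xstar)
      ≤ (∑ i, |s (n + 1) i|) * ‖x0 - xstar‖
        - (1 / 2) * (s (n + 1) ⬝ᵥ ((A (n + 1))⁻¹ *ᵥ s (n + 1)))
        + (1 / 2) * ∑ k ∈ range (n + 1), (lam k) ^ 2 * (g k ⬝ᵥ ((A k)⁻¹ *ᵥ g k)) :=
  stmt10_general p n f xstar x0 g s x lam hlam a ha hamono A hAdiag hs0 hs hx hsubgrad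
end

section
/- Let $D > 0$, $d_{n+1} > 0$, $s_{n+1}\in\mathbb{R}^p$, $\gamma_{n+1}>0$, and suppose (i) $2d_{n+1}\|s_{n+1}\| \leq \frac{\theta d_{n+1}^2}{\gamma_{n+1}} + \frac{2}{\theta}d_{n+1}\|s_{n+1}\| + \frac{1}{\theta}S$ for all $\theta>1$, where $S \leq \frac{2d_{n+1}^2}{\gamma_{n+1}}$ and $S \geq 0$. Then $\gamma_{n+1}\|s_{n+1}\| \leq (1+\sqrt{3})d_{n+1}$. -/
theorem stmt15 (p : ℕ) (D d γ S : ℝ) (s : EuclideanSpace ℝ (Fin p))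
    (hD : 0 < D) (hd : 0 < d) (hγ : 0 < γ)
    (hS0 : 0 ≤ S) (hS : S ≤ 2 * d ^ 2 / γ)
    (hyp : ∀ θ : ℝ, 1 < θ →
      2 * d * ‖s‖ ≤ θ * d ^ 2 / γ + (2 / θ) * d * ‖s‖ + (1 / θ) * S) :
    γ * ‖s‖ ≤ (1 + Real.sqrt 3) * d := by
  have h3 : Real.sqrt 3 ^ 2 = 3 := Real.sq_sqrt (by norm_num)
  have h3pos : 0 < Real.sqrt 3 := Real.sqrt_pos.mpr (by norm_num)
  set t := Real.sqrt 3
  have hθ : (1 : ℝ) < 1 + t := by linarith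
  have hθpos : (0 : ℝ) < 1 + t := by linarith
  have key := hyp (1 + t) hθ
  have hns : 0 ≤ ‖s‖ := norm_nonneg s
  have e : (1+t)*d^2/γ + 2/(1+t)*d*‖s‖ + 1/(1+t)*S
      = ((1+t)^2*d^2 + 2*γ*d*‖s‖ + γ*S)/((1+t)*γ) := by
    field_simp
  rw [e, le_div_iff₀ (mul_pos hθpos hγ)] at key
  rw [le_div_iff₀ hγ] at hS
  nlinarith [mul_pos h3pos hd, mul_pos (mul_pos h3pos hd) hγ, mul_nonneg h3pos.le (mul_nonneg hd.le hns)]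
end

section
/- Let $g_0,\dots,g_n$ be vectors in $\mathbb{R}^p$, $\lambda_k, \gamma_k$ real numbers, $s_0 = 0$, $s_{k+1} = s_k + \lambda_k g_k$. Then $\sum_{k=0}^{n}\gamma_k\lambda_k\langle g_k, s_k\rangle \geq \frac{\gamma_{n+1}}{2}\|s_{n+1}\|^2 - \sum_{k=0}^{n}\frac{\gamma_k}{2}\lambda_k^2\|g_k\|^2$, provided the sequence $\gamma_k$ is non-increasing and non-negative. -/
open Finset

theorem stmt18 (p n : ℕ) (g s : ℕ → EuclideanSpace ℝ (Fin p)) (lam γ : ℕ → ℝ)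
    (hs0 : s 0 = 0) (hs : ∀ k, s (k + 1) = s k + lam k • g k)
    (hγnn : ∀ k, 0 ≤ γ k)
    (hγ : ∀ k, γ (k + 1) ≤ γ k) :
    (γ (n + 1) / 2) * ‖s (n + 1)‖ ^ 2
      - ∑ k ∈ range (n + 1), (γ k / 2) * (lam k) ^ 2 * ‖g k‖ ^ 2
      ≤ ∑ k ∈ range (n + 1), γ k * lam k * (inner ℝ (g k) (s k) : ℝ) := by
  have key : ∀ k, ‖s (k + 1)‖ ^ 2
      = ‖s k‖ ^ 2 + 2 * lam k * (inner ℝ (g k) (s k) : ℝ) + (lam k) ^ 2 * ‖g k‖ ^ 2 := by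
    intro k
    rw [hs k, @norm_add_sq_real, real_inner_smul_right, real_inner_comm, norm_smul]
    simp [mul_pow]
    ring
  induction n with
  | zero =>
    simp only [zero_add, Finset.sum_range_one]
    have h := key 0
    rw [hs0] at h ⊢
    simp only [inner_zero_right, norm_zero] at h
    simp only [inner_zero_right]
    have h2 : ‖s 1‖ ^ 2 = (lam 0) ^ 2 * ‖g 0‖ ^ 2 := by linarith
    rw [h2]
    nlinarith [hγ 0, sq_nonneg (lam 0 * ‖g 0‖), mul_pow (lam 0) ‖g 0‖ 2]
  | succ n ih =>
    rw [Finset.sum_range_succ _ (n+1), Finset.sum_range_succ _ (n+1)]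
    have h := key (n + 1)
    have h1 := hγ (n + 1)
    have h2 := hγnn (n + 2)
    have h3 := hγnn (n + 1)
    nlinarith [sq_nonneg ‖s (n + 2)‖, sq_nonneg ‖s (n + 1)‖,
      mul_nonneg (sub_nonneg.mpr h1) (sq_nonneg ‖s (n + 2)‖)]
end

section
/- Let $g_{ki}$ for $k=0,\dots,n$ and $i=1,\dots,p$ be reals with $|g_{ki}|\leq G$ where $G>0$. Then $\sum_{i=1}^{p}\sum_{k=0}^{n}\frac{g_{ki}^2}{\sqrt{G^2+\sum_{j=0}^{k-1}g_{ji}^2}} \leq 2\sum_{i=1}^{p}\sqrt{G^2+\sum_{k=0}^{n-1}g_{ki}^2}$. -/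
/-! Since `t ≤ C`, the `k`-th term `t / √(C + S)` is at most `t / √(S + t)`, which is at most
`2 (√(S + t) - √S)` because `t = (√(S + t) - √S)(√(S + t) + √S)`. The sum therefore telescopes
to `2 √(S_{n+1}) ≤ 2 √(C + S_n)`; for the theorem take `t = g_{ki}^2`, `C = G^2`, and sum over `i`. -/

open Finset

lemma div_sqrt_add_le_two_mul_sqrt_sub {s t C : ℝ} (hs : 0 ≤ s) (ht : 0 ≤ t) (htC : t ≤ C) :
    t / √(C + s) ≤ 2 * (√(s + t) - √s) := by
  have hx : √s ^ 2 = s := Real.sq_sqrt hs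
  have hy : √(s + t) ^ 2 = s + t := Real.sq_sqrt (by linarith)
  have hz : √(C + s) ^ 2 = C + s := Real.sq_sqrt (by linarith)
  have hxy : √s ≤ √(s + t) := Real.sqrt_le_sqrt (by linarith)
  have hyz : √(s + t) ≤ √(C + s) := Real.sqrt_le_sqrt (by linarith)
  rcases (Real.sqrt_nonneg (C + s)).eq_or_lt with hz0 | hzpos
  · rw [← hz0, div_zero]
    linarith
  rw [div_le_iff₀ hzpos]
  nlinarith [mul_nonneg (sub_nonneg.mpr hxy) (sub_nonneg.mpr hyz), Real.sqrt_nonneg s]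

lemma sum_div_sqrt_add_sum_range_le {t : ℕ → ℝ} {C : ℝ} (n : ℕ) (ht : ∀ k, 0 ≤ t k)
    (htC : ∀ k ≤ n, t k ≤ C) :
    ∑ k ∈ range (n + 1), t k / √(C + ∑ j ∈ range k, t j)
      ≤ 2 * √(C + ∑ k ∈ range n, t k) := by
  set S : ℕ → ℝ := fun m => ∑ j ∈ range m, t j
  have hS : ∀ m, 0 ≤ S m := fun m => sum_nonneg fun j _ => ht j
  calc ∑ k ∈ range (n + 1), t k / √(C + S k)
      ≤ ∑ k ∈ range (n + 1), 2 * (√(S (k + 1)) - √(S k)) := by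
        refine sum_le_sum fun k hk => ?_
        rw [show S (k + 1) = S k + t k from sum_range_succ _ _]
        exact div_sqrt_add_le_two_mul_sqrt_sub (hS k) (ht k)
          (htC k (Nat.lt_succ_iff.mp (mem_range.mp hk)))
    _ = 2 * √(S (n + 1)) := by
        rw [← mul_sum, sum_range_sub (fun m => √(S m))]
        simp [S]
    _ ≤ 2 * √(C + S n) := by
        have hlast : S (n + 1) ≤ C + S n := by
          rw [show S (n + 1) = S n + t n from sum_range_succ _ _]
          linarith [htC n le_rfl]
        gcongr

theorem stmt19_general (p n : ℕ) (g : ℕ → Fin p → ℝ) (G : ℝ)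
    (hg : ∀ k ≤ n, ∀ i, |g k i| ≤ G) :
    ∑ i : Fin p, ∑ k ∈ range (n + 1),
        (g k i) ^ 2 / Real.sqrt (G ^ 2 + ∑ j ∈ range k, (g j i) ^ 2)
      ≤ 2 * ∑ i : Fin p, Real.sqrt (G ^ 2 + ∑ k ∈ range n, (g k i) ^ 2) := by
  rw [mul_sum]
  exact sum_le_sum fun i _ => sum_div_sqrt_add_sum_range_le n (fun k => sq_nonneg _)
    fun k hk => sq_le_sq' (abs_le.mp (hg k hk i)).1 (abs_le.mp (hg k hk i)).2

theorem stmt19 (p n : ℕ) (g : ℕ → Fin p → ℝ) (G : ℝ) (hG : 0 < G)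
    (hg : ∀ k ≤ n, ∀ i, |g k i| ≤ G) :
    ∑ i : Fin p, ∑ k ∈ range (n + 1),
        (g k i) ^ 2 / Real.sqrt (G ^ 2 + ∑ j ∈ range k, (g j i) ^ 2)
      ≤ 2 * ∑ i : Fin p, Real.sqrt (G ^ 2 + ∑ k ∈ range n, (g k i) ^ 2) :=
  stmt19_general p n g G hg
end
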